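/- ('Go to the bottom' lemma, first equation.) Let t be an integer with t ≥ 0 and s ≥ t + 2, and let m ≥ ks. Let B(m) denote the number of configurations of s k-mers on the n × m lattice in which row jk+1 is bottom-anchored for every j ∈ {0, …, t} and at least one placement occupies a site in row m. Let B₁(m) denote the number of configurations in which row jk+1 is bottom-anchored for every j ∈ {0, …, t+1}. Let B₂(m) denote the number of configurations in which row jk+1 is bottom-anchored for every j ∈ {0, …, t}, row (t+1)k+1 is barred, and at least one placement occupies a site in row m. Then B(m) = B₁(m) + B₂(m). -/
import Mathlib


/-- The set of sites occupied by a horizontal `k`-mer starting at column `c`, row `r`. -/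
def horizKmer (k c r : ℕ) : Finset (ℕ × ℕ) :=
  (Finset.range k).image fun i => (c + i, r)

/-- The set of sites occupied by a vertical `k`-mer at column `c` starting at row `r`. -/
def vertKmer (k c r : ℕ) : Finset (ℕ × ℕ) :=
  (Finset.range k).image fun i => (c, r + i)

/-- A `k`-mer placement on the `n × m` lattice with free boundary conditions,
identified with its set of occupied sites `(c, r)`, `1 ≤ c ≤ n`, `1 ≤ r ≤ m`. -/
def IsFreePlacement (k n m : ℕ) (p : Finset (ℕ × ℕ)) : Prop :=
  (∃ c r, 1 ≤ c ∧ c + k ≤ n + 1 ∧ 1 ≤ r ∧ r ≤ m ∧ p = horizKmer k c r) ∨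
  (∃ c r, 1 ≤ c ∧ c ≤ n ∧ 1 ≤ r ∧ r + k ≤ m + 1 ∧ p = vertKmer k c r)

/-- A configuration of `s` `k`-mers on the `n × m` lattice with free boundary
conditions: a set of `s` placements whose occupied site sets are pairwise disjoint. -/
def IsFreeConfig (k n m s : ℕ) (C : Finset (Finset (ℕ × ℕ))) : Prop :=
  C.card = s ∧ (∀ p ∈ C, IsFreePlacement k n m p) ∧
    (C : Set (Finset (ℕ × ℕ))).Pairwise fun p q => Disjoint p q

/-- `a(m, s)`: the number of configurations of `s` `k`-mers on the `n × m`
lattice with free boundary conditions. -/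
noncomputable def freeCount (k n m s : ℕ) : ℕ :=
  {C | IsFreeConfig k n m s C}.ncard

/-- A placement touches row `r` from above: it occupies a site in row `r`
and all its sites are in rows `≥ r` (i.e. it is horizontal in row `r`, or
vertical occupying rows `r, r+1, …, r+k-1`). -/
def TouchesFromAbove (p : Finset (ℕ × ℕ)) (r : ℕ) : Prop :=
  (∃ q ∈ p, q.2 = r) ∧ ∀ q ∈ p, r ≤ q.2

/-- A placement overhangs row `r`: it occupies a site in row `r` and also a site
in a row strictly below `r` (hence it is vertical with lowest occupied row `< r`). -/
def Overhangs (p : Finset (ℕ × ℕ)) (r : ℕ) : Prop :=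
  (∃ q ∈ p, q.2 = r) ∧ ∃ q ∈ p, q.2 < r

/-- In a configuration, row `r` is bottom-anchored: at least one placement occupies
a site in row `r`, and every placement occupying a site in row `r` touches row `r`
from above. -/
def BottomAnchored (C : Finset (Finset (ℕ × ℕ))) (r : ℕ) : Prop :=
  (∃ p ∈ C, ∃ q ∈ p, q.2 = r) ∧
    ∀ p ∈ C, (∃ q ∈ p, q.2 = r) → TouchesFromAbove p r

/-- In a configuration, row `r` is barred: at least one placement overhangs row `r`. -/
def Barred (C : Finset (Finset (ℕ × ℕ))) (r : ℕ) : Prop :=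
  ∃ p ∈ C, Overhangs p r

section Aux

lemma mem_horizKmer {k c r : ℕ} {q : ℕ × ℕ} :
    q ∈ horizKmer k c r ↔ ∃ i < k, q = (c + i, r) := by
  simp [horizKmer, eq_comm]

lemma mem_vertKmer {k c r : ℕ} {q : ℕ × ℕ} :
    q ∈ vertKmer k c r ↔ ∃ i < k, q = (c, r + i) := by
  simp [vertKmer, eq_comm]

lemma placement_nonempty {k n m : ℕ} (hk : 1 ≤ k) {p : Finset (ℕ × ℕ)}
    (h : IsFreePlacement k n m p) : p.Nonempty := by
  rcases h with ⟨c, r, _, _, _, _, rfl⟩ | ⟨c, r, _, _, _, _, rfl⟩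
  · exact ⟨(c, r), mem_horizKmer.2 ⟨0, hk, by simp⟩⟩
  · exact ⟨(c, r), mem_vertKmer.2 ⟨0, hk, by simp⟩⟩

lemma placement_bounds {k n m : ℕ} {p : Finset (ℕ × ℕ)}
    (h : IsFreePlacement k n m p) {q : ℕ × ℕ} (hq : q ∈ p) :
    1 ≤ q.1 ∧ q.1 ≤ n ∧ 1 ≤ q.2 ∧ q.2 ≤ m := by
  rcases h with ⟨c, r, h1, h2, h3, h4, rfl⟩ | ⟨c, r, h1, h2, h3, h4, rfl⟩
  · obtain ⟨i, hi, rfl⟩ := mem_horizKmer.1 hq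
    exact ⟨by omega, by omega, h3, h4⟩
  · obtain ⟨i, hi, rfl⟩ := mem_vertKmer.1 hq
    exact ⟨h1, h2, by omega, by omega⟩

/-- Row convexity of placements. -/
lemma placement_row_convex {k n m : ℕ} {p : Finset (ℕ × ℕ)}
    (h : IsFreePlacement k n m p) {q1 q2 : ℕ × ℕ} (h1 : q1 ∈ p) (h2 : q2 ∈ p)
    {x : ℕ} (hx1 : q1.2 ≤ x) (hx2 : x ≤ q2.2) : ∃ q ∈ p, q.2 = x := by
  rcases h with ⟨c, r, _, _, _, _, rfl⟩ | ⟨c, r, _, _, _, _, rfl⟩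
  · obtain ⟨i, hi, rfl⟩ := mem_horizKmer.1 h1
    obtain ⟨j, hj, rfl⟩ := mem_horizKmer.1 h2
    exact ⟨(c + i, r), h1, by simp at hx1 hx2 ⊢; omega⟩
  · obtain ⟨i, hi, rfl⟩ := mem_vertKmer.1 h1
    obtain ⟨j, hj, rfl⟩ := mem_vertKmer.1 h2
    refine ⟨(c, x), mem_vertKmer.2 ⟨x - r, by simp at hx1 hx2 ⊢; omega⟩, rfl⟩

lemma not_barred_of_anchored {C : Finset (Finset (ℕ × ℕ))} {r : ℕ}
    (hA : BottomAnchored C r) (hB : Barred C r) : False := by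
  obtain ⟨p, hp, ⟨q1, hq1, hq1r⟩, q2, hq2, hq2r⟩ := hB
  have := (hA.2 p hp ⟨q1, hq1, hq1r⟩).2 q2 hq2
  omega

/-- Finiteness of the set of configurations satisfying any property. -/
lemma config_set_finite (k n m s : ℕ) (Q : Finset (Finset (ℕ × ℕ)) → Prop) :
    {C | IsFreeConfig k n m s C ∧ Q C}.Finite := by
  apply Set.Finite.subset
    (((Finset.Icc 1 n ×ˢ Finset.Icc 1 m).powerset.powerset : Finset _).finite_toSet)
  rintro C ⟨⟨-, hpl, -⟩, -⟩
  simp only [Finset.coe_powerset, Set.mem_preimage, Set.mem_powerset_iff,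
    Finset.coe_powerset] at *
  intro p hp
  simp only [Set.mem_preimage, Set.mem_powerset_iff]
  intro q hq
  have := placement_bounds (hpl p hp) hq
  exact Finset.mem_product.2 ⟨Finset.mem_Icc.2 ⟨this.1, this.2.1⟩,
    Finset.mem_Icc.2 ⟨this.2.2.1, this.2.2.2⟩⟩

end Aux

section Move

open Classical in
/-- Translate vertically (by `f` on row indices) all placements not entirely
below row `r`. -/
noncomputable def moveUpper (r : ℕ) (f : ℕ → ℕ) (C : Finset (Finset (ℕ × ℕ))) :
    Finset (Finset (ℕ × ℕ)) :=
  C.image fun p => if ∀ q ∈ p, q.2 < r then p else p.image fun q => (q.1, f q.2)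

/-- The least occupied row strictly above `r`. -/
noncomputable def minUpper (r : ℕ) (C : Finset (Finset (ℕ × ℕ))) : ℕ :=
  sInf {x : ℕ | r < x ∧ ∃ p ∈ C, ∃ q ∈ p, q.2 = x}

/-- The greatest occupied row. -/
noncomputable def maxRow (C : Finset (Finset (ℕ × ℕ))) : ℕ :=
  sSup {x : ℕ | ∃ p ∈ C, ∃ q ∈ p, q.2 = x}

variable {k n m s r : ℕ} {f g : ℕ → ℕ} {C : Finset (Finset (ℕ × ℕ))}

lemma moveUpper_mem {P : Finset (ℕ × ℕ)} :
    P ∈ moveUpper r f C ↔ ∃ p ∈ C,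
      P = if ∀ q ∈ p, q.2 < r then p else p.image fun q => (q.1, f q.2) := by
  simp [moveUpper, eq_comm]

lemma moveUpper_mem_of_mem {p : Finset (ℕ × ℕ)} (hp : p ∈ C) :
    (if ∀ q ∈ p, q.2 < r then p else p.image fun q => (q.1, f q.2)) ∈ moveUpper r f C :=
  moveUpper_mem.2 ⟨p, hp, rfl⟩

lemma moveUpper_disjoint
    (hC : IsFreeConfig k n m s C)
    (hrows : ∀ p ∈ C, ¬(∀ q ∈ p, q.2 < r) → ∀ q ∈ p, r ≤ f q.2)
    (hinj : ∀ p ∈ C, ∀ p' ∈ C, ¬(∀ q ∈ p, q.2 < r) → ¬(∀ q ∈ p', q.2 < r) →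
      ∀ q ∈ p, ∀ q' ∈ p', f q.2 = f q'.2 → q.2 = q'.2)
    {p p' : Finset (ℕ × ℕ)} (hp : p ∈ C) (hp' : p' ∈ C) (hne : p ≠ p') :
    Disjoint (if ∀ q ∈ p, q.2 < r then p else p.image fun q => (q.1, f q.2))
      (if ∀ q ∈ p', q.2 < r then p' else p'.image fun q => (q.1, f q.2)) := by
  have hd : Disjoint p p' := hC.2.2 hp hp' hne
  by_cases h1 : ∀ q ∈ p, q.2 < r <;> by_cases h2 : ∀ q ∈ p', q.2 < r
  · rw [if_pos h1, if_pos h2]; exact hd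
  · rw [if_pos h1, if_neg h2, Finset.disjoint_left]
    intro a ha hb
    obtain ⟨q', hq', rfl⟩ := Finset.mem_image.1 hb
    exact absurd (hrows p' hp' h2 q' hq') (by simpa using (h1 _ ha).not_ge)
  · rw [if_neg h1, if_pos h2, Finset.disjoint_left]
    intro a ha hb
    obtain ⟨q, hq, rfl⟩ := Finset.mem_image.1 ha
    exact absurd (hrows p hp h1 q hq) (by simpa using (h2 _ hb).not_ge)
  · rw [if_neg h1, if_neg h2, Finset.disjoint_left]
    intro a ha hb
    obtain ⟨q, hq, rfl⟩ := Finset.mem_image.1 ha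
    obtain ⟨q', hq', heq⟩ := Finset.mem_image.1 hb
    obtain ⟨h_1, h_2⟩ := Prod.ext_iff.1 heq
    have := hinj p' hp' p hp h2 h1 q' hq' q hq h_2
    have : q' = q := Prod.ext h_1 this
    exact Finset.disjoint_left.1 hd hq (this ▸ hq')

lemma moveUpper_isFreeConfig (hk : 1 ≤ k)
    (hC : IsFreeConfig k n m s C)
    (hrows : ∀ p ∈ C, ¬(∀ q ∈ p, q.2 < r) → ∀ q ∈ p, r ≤ f q.2)
    (hinj : ∀ p ∈ C, ∀ p' ∈ C, ¬(∀ q ∈ p, q.2 < r) → ¬(∀ q ∈ p', q.2 < r) →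
      ∀ q ∈ p, ∀ q' ∈ p', f q.2 = f q'.2 → q.2 = q'.2)
    (hvalid : ∀ p ∈ C, ¬(∀ q ∈ p, q.2 < r) →
      IsFreePlacement k n m (p.image fun q => (q.1, f q.2))) :
    IsFreeConfig k n m s (moveUpper r f C) := by
  classical
  have hinjOn : ∀ p ∈ C, ∀ p' ∈ C,
      (if ∀ q ∈ p, q.2 < r then p else p.image fun q => (q.1, f q.2)) =
      (if ∀ q ∈ p', q.2 < r then p' else p'.image fun q => (q.1, f q.2)) → p = p' := by
    intro p hp p' hp' heq
    by_contra hne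
    have hd := moveUpper_disjoint hC hrows hinj hp hp' hne
    rw [heq, disjoint_self] at hd
    have hne' : (if ∀ q ∈ p', q.2 < r then p' else p'.image fun q => (q.1, f q.2)).Nonempty := by
      have hpe : p'.Nonempty := placement_nonempty hk (hC.2.1 p' hp')
      split
      · exact hpe
      · exact hpe.image _
    rw [hd] at hne'
    exact absurd hne' (by simp [Finset.bot_eq_empty])
  refine ⟨?_, ?_, ?_⟩
  · rw [moveUpper, Finset.card_image_of_injOn ?_, hC.1]
    intro p hp p' hp' h
    exact hinjOn p hp p' hp' h
  · intro P hP
    obtain ⟨p, hp, rfl⟩ := moveUpper_mem.1 hP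
    split
    · exact hC.2.1 p hp
    · exact hvalid p hp (by assumption)
  · intro P hP P' hP' hne
    obtain ⟨p, hp, rfl⟩ := moveUpper_mem.1 hP
    obtain ⟨p', hp', rfl⟩ := moveUpper_mem.1 hP'
    exact moveUpper_disjoint hC hrows hinj hp hp'
      (fun h => hne (by rw [h]))

/-- Occupancy of rows below `r` is unchanged, assuming a row dichotomy. -/
lemma moveUpper_anchored_low
    (hdich : ∀ p ∈ C, ¬(∀ q ∈ p, q.2 < r) → ∀ q ∈ p, r ≤ q.2)
    (hrows : ∀ p ∈ C, ¬(∀ q ∈ p, q.2 < r) → ∀ q ∈ p, r ≤ f q.2)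
    {x : ℕ} (hx : x < r) :
    (BottomAnchored (moveUpper r f C) x ↔ BottomAnchored C x) := by
  classical
  have key : ∀ P, (P ∈ moveUpper r f C ∧ ∃ q ∈ P, q.2 = x) ↔ (P ∈ C ∧ ∃ q ∈ P, q.2 = x) := by
    intro P
    constructor
    · rintro ⟨hP, q, hq, rfl⟩
      obtain ⟨p, hp, rfl⟩ := moveUpper_mem.1 hP
      by_cases h1 : ∀ a ∈ p, a.2 < r
      · rw [if_pos h1] at hq ⊢
        exact ⟨hp, q, hq, rfl⟩
      · rw [if_neg h1] at hq
        obtain ⟨a, ha, rfl⟩ := Finset.mem_image.1 hq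
        exact absurd (hrows p hp h1 a ha) (by omega)
    · rintro ⟨hP, q, hq, rfl⟩
      have h1 : ∀ a ∈ P, a.2 < r := by
        by_contra h1
        exact absurd (hdich P hP h1 q hq) (by omega)
      have hm := moveUpper_mem_of_mem (r := r) (f := f) hP
      rw [if_pos h1] at hm
      exact ⟨hm, q, hq, rfl⟩
  unfold BottomAnchored
  constructor
  · rintro ⟨⟨p, hp, hocc⟩, hall⟩
    refine ⟨?_, ?_⟩
    · obtain ⟨hp', hocc'⟩ := (key p).1 ⟨hp, hocc⟩
      exact ⟨p, hp', hocc'⟩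
    · intro p hp hocc
      obtain ⟨hp', hocc'⟩ := (key p).2 ⟨hp, hocc⟩
      exact hall p hp' hocc'
  · rintro ⟨⟨p, hp, hocc⟩, hall⟩
    refine ⟨?_, ?_⟩
    · obtain ⟨hp', hocc'⟩ := (key p).2 ⟨hp, hocc⟩
      exact ⟨p, hp', hocc'⟩
    · intro p hp hocc
      obtain ⟨hp', hocc'⟩ := (key p).1 ⟨hp, hocc⟩
      exact hall p hp' hocc'

/-- Composition of two `moveUpper` operations that invert each other on upper rows. -/
lemma moveUpper_comp (hk : 1 ≤ k) (hC : IsFreeConfig k n m s C)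
    (hrows : ∀ p ∈ C, ¬(∀ q ∈ p, q.2 < r) → ∀ q ∈ p, r ≤ f q.2)
    (hgf : ∀ p ∈ C, ¬(∀ q ∈ p, q.2 < r) → ∀ q ∈ p, g (f q.2) = q.2) :
    moveUpper r g (moveUpper r f C) = C := by
  classical
  rw [moveUpper, moveUpper, Finset.image_image]
  have : ∀ p ∈ C,
      ((fun p => if ∀ q ∈ p, q.2 < r then p else p.image fun q => (q.1, g q.2)) ∘
        fun p => if ∀ q ∈ p, q.2 < r then p else p.image fun q => (q.1, f q.2)) p = p := by
    intro p hp
    simp only [Function.comp]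
    by_cases h1 : ∀ q ∈ p, q.2 < r
    · rw [if_pos h1, if_pos h1]
    · rw [if_neg h1]
      have hne : ¬ ∀ q ∈ p.image fun q => (q.1, f q.2), q.2 < r := by
        push_neg at h1 ⊢
        obtain ⟨q, hq, hq2⟩ := h1
        refine ⟨(q.1, f q.2), Finset.mem_image_of_mem _ hq, ?_⟩
        have := hrows p hp (by push_neg; exact ⟨q, hq, hq2⟩) q hq
        omega
      rw [if_neg hne, Finset.image_image]
      have : ∀ q ∈ p, ((fun q : ℕ × ℕ => (q.1, g q.2)) ∘ fun q : ℕ × ℕ => (q.1, f q.2)) q = q := by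
        intro q hq
        simp only [Function.comp]
        rw [hgf p hp h1 q hq]
      rw [Finset.image_congr (fun q hq => this q hq), Finset.image_id']
  rw [Finset.image_congr (fun p hp => this p hp), Finset.image_id']
end Move

section Maps

/-- Push the part of the configuration above row `r` down so that it touches row `r`. -/
noncomputable def phiFn (r : ℕ) (C : Finset (Finset (ℕ × ℕ))) : Finset (Finset (ℕ × ℕ)) :=
  moveUpper r (fun x => x - (minUpper r C - r)) C

/-- Push the part of the configuration at or above row `r` up so that it touches row `m`. -/
noncomputable def psiFn (r m : ℕ) (C : Finset (Finset (ℕ × ℕ))) : Finset (Finset (ℕ × ℕ)) :=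
  moveUpper r (fun x => x + (m - maxRow C)) C

lemma phi_spec {k n m s r : ℕ} {C : Finset (Finset (ℕ × ℕ))}
    (hk : 2 ≤ k) (hr : 1 ≤ r) (hrm : r < m)
    (hC : IsFreeConfig k n m s C)
    (htop : ∃ p ∈ C, ∃ q ∈ p, q.2 = m)
    (hnr : ¬ ∃ p ∈ C, ∃ q ∈ p, q.2 = r) :
    IsFreeConfig k n m s (phiFn r C) ∧ BottomAnchored (phiFn r C) r ∧
      (¬ ∃ p ∈ phiFn r C, ∃ q ∈ p, q.2 = m) ∧
      (∀ x < r, (BottomAnchored (phiFn r C) x ↔ BottomAnchored C x)) ∧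
      psiFn r m (phiFn r C) = C := by
  classical
  have hk1 : 1 ≤ k := by omega
  set μ := minUpper r C with hμ
  set d := μ - r with hd
  set f : ℕ → ℕ := fun x => x - d with hf
  -- basic facts about μ
  have hmem : μ ∈ {x : ℕ | r < x ∧ ∃ p ∈ C, ∃ q ∈ p, q.2 = x} := by
    apply Nat.sInf_mem
    exact ⟨m, hrm, htop⟩
  obtain ⟨hrμ, hoccμ⟩ := hmem
  have hμm : μ ≤ m := Nat.sInf_le ⟨hrm, htop⟩
  have hμrd : μ = r + d := by omega
  have hd1 : 1 ≤ d := by omega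
  -- dichotomy: upper pieces lie strictly above row r
  have hup : ∀ p ∈ C, ¬(∀ q ∈ p, q.2 < r) → ∀ q ∈ p, r < q.2 := by
    intro p hp h1 q hq
    push_neg at h1
    obtain ⟨q0, hq0, hq0r⟩ := h1
    by_contra h
    push_neg at h
    rcases eq_or_lt_of_le h with h' | h'
    · exact hnr ⟨p, hp, q, hq, h'⟩
    · obtain ⟨q2, hq2, hq2r⟩ :=
        placement_row_convex (hC.2.1 p hp) hq hq0 (le_of_lt h') hq0r
      exact hnr ⟨p, hp, q2, hq2, hq2r⟩
  -- upper rows are at least μ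
  have hmin : ∀ p ∈ C, ¬(∀ q ∈ p, q.2 < r) → ∀ q ∈ p, μ ≤ q.2 := by
    intro p hp h1 q hq
    exact Nat.sInf_le ⟨hup p hp h1 q hq, p, hp, q, hq, rfl⟩
  have hrows : ∀ p ∈ C, ¬(∀ q ∈ p, q.2 < r) → ∀ q ∈ p, r ≤ f q.2 := by
    intro p hp h1 q hq
    have := hmin p hp h1 q hq
    simp only [hf]
    omega
  have hinj : ∀ p ∈ C, ∀ p' ∈ C, ¬(∀ q ∈ p, q.2 < r) → ¬(∀ q ∈ p', q.2 < r) →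
      ∀ q ∈ p, ∀ q' ∈ p', f q.2 = f q'.2 → q.2 = q'.2 := by
    intro p hp p' hp' h1 h2 q hq q' hq' heq
    have := hmin p hp h1 q hq
    have := hmin p' hp' h2 q' hq'
    simp only [hf] at heq
    omega
  have hbound : ∀ p ∈ C, ∀ q ∈ p, q.2 ≤ m := fun p hp q hq =>
    (placement_bounds (hC.2.1 p hp) hq).2.2.2
  have hvalid : ∀ p ∈ C, ¬(∀ q ∈ p, q.2 < r) →
      IsFreePlacement k n m (p.image fun q => (q.1, f q.2)) := by
    intro p hp h1
    rcases hC.2.1 p hp with ⟨c, r0, h2, h3, h4, h5, hpe⟩ | ⟨c, r0, h2, h3, h4, h5, hpe⟩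
    · have hr0 : μ ≤ r0 := by
        have : (c, r0) ∈ p := by
          rw [hpe]; exact mem_horizKmer.2 ⟨0, hk1, by simp⟩
        exact hmin p hp h1 (c, r0) this
      left
      refine ⟨c, r0 - d, h2, h3, by omega, by omega, ?_⟩
      rw [hpe, horizKmer, Finset.image_image, horizKmer]
      rfl
    · have hr0 : μ ≤ r0 := by
        have : (c, r0) ∈ p := by
          rw [hpe]; exact mem_vertKmer.2 ⟨0, hk1, by simp⟩
        exact hmin p hp h1 (c, r0) this
      right
      refine ⟨c, r0 - d, h2, h3, by omega, by omega, ?_⟩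
      rw [hpe, vertKmer, Finset.image_image, vertKmer]
      apply Finset.image_congr
      intro i _
      simp only [Function.comp, hf]
      have : d ≤ r0 := by omega
      exact Prod.ext rfl (by omega)
  have hcfg : IsFreeConfig k n m s (phiFn r C) :=
    moveUpper_isFreeConfig hk1 hC hrows hinj hvalid
  refine ⟨hcfg, ?_, ?_, ?_, ?_⟩
  · -- bottom-anchored at r
    constructor
    · obtain ⟨p0, hp0, q0, hq0, hq0μ⟩ := hoccμ
      have hupper : ¬ ∀ q ∈ p0, q.2 < r := by
        push_neg
        exact ⟨q0, hq0, by omega⟩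
      refine ⟨p0.image fun q => (q.1, f q.2), ?_, (q0.1, f q0.2),
        Finset.mem_image_of_mem _ hq0, ?_⟩
      · have := moveUpper_mem_of_mem (r := r) (f := f) hp0
        rwa [if_neg hupper] at this
      · simp only [hf]; omega
    · intro P hP ⟨q, hq, hqr⟩
      obtain ⟨p, hp, rfl⟩ := moveUpper_mem.1 hP
      by_cases h1 : ∀ a ∈ p, a.2 < r
      · rw [if_pos h1] at hq
        exact absurd (h1 q hq) (by omega)
      · rw [if_neg h1] at hq ⊢
        refine ⟨⟨q, hq, hqr⟩, ?_⟩
        intro q' hq'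
        obtain ⟨a, ha, rfl⟩ := Finset.mem_image.1 hq'
        exact hrows p hp h1 a ha
  · -- row m not occupied
    rintro ⟨P, hP, q, hq, hqm⟩
    obtain ⟨p, hp, rfl⟩ := moveUpper_mem.1 hP
    by_cases h1 : ∀ a ∈ p, a.2 < r
    · rw [if_pos h1] at hq
      exact absurd (h1 q hq) (by omega)
    · rw [if_neg h1] at hq
      obtain ⟨a, ha, rfl⟩ := Finset.mem_image.1 hq
      have := hbound p hp a ha
      simp only [hf] at hqm
      omega
  · -- anchoring below r unchanged
    intro x hx
    exact moveUpper_anchored_low (fun p hp h1 q hq => le_of_lt (hup p hp h1 q hq)) hrows hx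
  · -- ψ ∘ φ = id
    have hmaxX : maxRow (phiFn r C) = m - d := by
      have hocc : ∃ p ∈ phiFn r C, ∃ q ∈ p, q.2 = m - d := by
        obtain ⟨p1, hp1, q1, hq1, hq1m⟩ := htop
        have hupper : ¬ ∀ q ∈ p1, q.2 < r := by
          push_neg; exact ⟨q1, hq1, by omega⟩
        refine ⟨p1.image fun q => (q.1, f q.2), ?_, (q1.1, f q1.2),
          Finset.mem_image_of_mem _ hq1, ?_⟩
        · have := moveUpper_mem_of_mem (r := r) (f := f) hp1
          rwa [if_neg hupper] at this
        · simp only [hf]; omega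
      have hub : ∀ x ∈ {x : ℕ | ∃ p ∈ phiFn r C, ∃ q ∈ p, q.2 = x}, x ≤ m - d := by
        rintro x ⟨P, hP, q, hq, rfl⟩
        obtain ⟨p, hp, rfl⟩ := moveUpper_mem.1 hP
        by_cases h1 : ∀ a ∈ p, a.2 < r
        · rw [if_pos h1] at hq
          have := h1 q hq
          omega
        · rw [if_neg h1] at hq
          obtain ⟨a, ha, rfl⟩ := Finset.mem_image.1 hq
          have := hbound p hp a ha
          simp only [hf]
          omega
      exact le_antisymm (csSup_le ⟨m - d, hocc⟩ hub)
        (le_csSup ⟨m - d, hub⟩ hocc)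
    show moveUpper r (fun x => x + (m - maxRow (phiFn r C))) (moveUpper r f C) = C
    rw [hmaxX, show m - (m - d) = d from by omega]
    apply moveUpper_comp hk1 hC hrows
    intro p hp h1 q hq
    have := hmin p hp h1 q hq
    simp only [hf]
    omega

end Maps

section Maps2

lemma psi_spec {k n m s r : ℕ} {C : Finset (Finset (ℕ × ℕ))}
    (hk : 2 ≤ k) (hr : 1 ≤ r) (hrm : r < m)
    (hC : IsFreeConfig k n m s C)
    (hanchr : BottomAnchored C r)
    (hnm : ¬ ∃ p ∈ C, ∃ q ∈ p, q.2 = m) :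
    IsFreeConfig k n m s (psiFn r m C) ∧
      (∃ p ∈ psiFn r m C, ∃ q ∈ p, q.2 = m) ∧
      (¬ ∃ p ∈ psiFn r m C, ∃ q ∈ p, q.2 = r) ∧
      (∀ x < r, (BottomAnchored (psiFn r m C) x ↔ BottomAnchored C x)) ∧
      phiFn r (psiFn r m C) = C := by
  classical
  have hk1 : 1 ≤ k := by omega
  set M := maxRow C with hM
  set d := m - M with hd
  set f : ℕ → ℕ := fun x => x + d with hf
  have hbound : ∀ p ∈ C, ∀ q ∈ p, q.2 ≤ m := fun p hp q hq =>
    (placement_bounds (hC.2.1 p hp) hq).2.2.2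
  have hbdd : BddAbove {x : ℕ | ∃ p ∈ C, ∃ q ∈ p, q.2 = x} := by
    refine ⟨m, ?_⟩
    rintro x ⟨p, hp, q, hq, rfl⟩
    exact hbound p hp q hq
  have hoccr : ∃ p ∈ C, ∃ q ∈ p, q.2 = r := hanchr.1
  have hMmem : M ∈ {x : ℕ | ∃ p ∈ C, ∃ q ∈ p, q.2 = x} :=
    Nat.sSup_mem ⟨r, hoccr⟩ hbdd
  have hMr : r ≤ M := le_csSup hbdd hoccr
  have hMm : M < m := by
    rcases Nat.lt_or_ge M m with h | h
    · exact h
    · obtain ⟨p, hp, q, hq, hqM⟩ := hMmem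
      have := hbound p hp q hq
      exact absurd ⟨p, hp, q, hq, by omega⟩ hnm
  have hd1 : 1 ≤ d := by omega
  have hMd : M + d = m := by omega
  have hle : ∀ p ∈ C, ∀ q ∈ p, q.2 ≤ M := by
    intro p hp q hq
    exact le_csSup hbdd ⟨p, hp, q, hq, rfl⟩
  -- dichotomy: upper pieces lie at or above row r
  have hup : ∀ p ∈ C, ¬(∀ q ∈ p, q.2 < r) → ∀ q ∈ p, r ≤ q.2 := by
    intro p hp h1 q hq
    push_neg at h1
    obtain ⟨q0, hq0, hq0r⟩ := h1
    by_contra h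
    push_neg at h
    obtain ⟨q2, hq2, hq2r⟩ :=
      placement_row_convex (hC.2.1 p hp) hq hq0 (le_of_lt h) hq0r
    have := (hanchr.2 p hp ⟨q2, hq2, hq2r⟩).2 q hq
    omega
  have hrows : ∀ p ∈ C, ¬(∀ q ∈ p, q.2 < r) → ∀ q ∈ p, r ≤ f q.2 := by
    intro p hp h1 q hq
    have := hup p hp h1 q hq
    simp only [hf]
    omega
  have hinj : ∀ p ∈ C, ∀ p' ∈ C, ¬(∀ q ∈ p, q.2 < r) → ¬(∀ q ∈ p', q.2 < r) →
      ∀ q ∈ p, ∀ q' ∈ p', f q.2 = f q'.2 → q.2 = q'.2 := by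
    intro p hp p' hp' h1 h2 q hq q' hq' heq
    simp only [hf] at heq
    omega
  have hvalid : ∀ p ∈ C, ¬(∀ q ∈ p, q.2 < r) →
      IsFreePlacement k n m (p.image fun q => (q.1, f q.2)) := by
    intro p hp h1
    rcases hC.2.1 p hp with ⟨c, r0, h2, h3, h4, h5, hpe⟩ | ⟨c, r0, h2, h3, h4, h5, hpe⟩
    · have hr0 : r0 ≤ M := by
        have : (c, r0) ∈ p := by
          rw [hpe]; exact mem_horizKmer.2 ⟨0, hk1, by simp⟩
        exact hle p hp (c, r0) this
      left
      refine ⟨c, r0 + d, h2, h3, by omega, by omega, ?_⟩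
      rw [hpe, horizKmer, Finset.image_image, horizKmer]
      rfl
    · have hr0 : r0 + (k - 1) ≤ M := by
        have : (c, r0 + (k - 1)) ∈ p := by
          rw [hpe]; exact mem_vertKmer.2 ⟨k - 1, by omega, by simp⟩
        exact hle p hp (c, r0 + (k - 1)) this
      right
      refine ⟨c, r0 + d, h2, h3, by omega, by omega, ?_⟩
      rw [hpe, vertKmer, Finset.image_image, vertKmer]
      apply Finset.image_congr
      intro i _
      simp only [Function.comp, hf]
      exact Prod.ext rfl (by omega)
  have hcfg : IsFreeConfig k n m s (psiFn r m C) :=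
    moveUpper_isFreeConfig hk1 hC hrows hinj hvalid
  refine ⟨hcfg, ?_, ?_, ?_, ?_⟩
  · -- row m occupied
    obtain ⟨p1, hp1, q1, hq1, hq1M⟩ := hMmem
    have hupper : ¬ ∀ q ∈ p1, q.2 < r := by
      push_neg; exact ⟨q1, hq1, by omega⟩
    refine ⟨p1.image fun q => (q.1, f q.2), ?_, (q1.1, f q1.2),
      Finset.mem_image_of_mem _ hq1, ?_⟩
    · have := moveUpper_mem_of_mem (r := r) (f := f) hp1
      rwa [if_neg hupper] at this
    · simp only [hf]; omega
  · -- row r not occupied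
    rintro ⟨P, hP, q, hq, hqr⟩
    obtain ⟨p, hp, rfl⟩ := moveUpper_mem.1 hP
    by_cases h1 : ∀ a ∈ p, a.2 < r
    · rw [if_pos h1] at hq
      exact absurd (h1 q hq) (by omega)
    · rw [if_neg h1] at hq
      obtain ⟨a, ha, rfl⟩ := Finset.mem_image.1 hq
      have := hup p hp h1 a ha
      simp only [hf] at hqr
      omega
  · -- anchoring below r unchanged
    intro x hx
    exact moveUpper_anchored_low hup hrows hx
  · -- φ ∘ ψ = id
    have hμX : minUpper r (psiFn r m C) = r + d := by
      have hocc : r < r + d ∧ ∃ p ∈ psiFn r m C, ∃ q ∈ p, q.2 = r + d := by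
        obtain ⟨p1, hp1, q1, hq1, hq1r⟩ := hoccr
        have hupper : ¬ ∀ q ∈ p1, q.2 < r := by
          push_neg; exact ⟨q1, hq1, by omega⟩
        refine ⟨by omega, p1.image fun q => (q.1, f q.2), ?_, (q1.1, f q1.2),
          Finset.mem_image_of_mem _ hq1, ?_⟩
        · have := moveUpper_mem_of_mem (r := r) (f := f) hp1
          rwa [if_neg hupper] at this
        · simp only [hf]; omega
      have hlb : ∀ x ∈ {x : ℕ | r < x ∧ ∃ p ∈ psiFn r m C, ∃ q ∈ p, q.2 = x}, r + d ≤ x := by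
        rintro x ⟨hrx, P, hP, q, hq, rfl⟩
        obtain ⟨p, hp, rfl⟩ := moveUpper_mem.1 hP
        by_cases h1 : ∀ a ∈ p, a.2 < r
        · rw [if_pos h1] at hq
          have := h1 q hq
          omega
        · rw [if_neg h1] at hq
          obtain ⟨a, ha, rfl⟩ := Finset.mem_image.1 hq
          have := hup p hp h1 a ha
          simp only [hf]
          omega
      exact le_antisymm (Nat.sInf_le hocc) (le_csInf ⟨r + d, hocc⟩ hlb)
    show moveUpper r (fun x => x - (minUpper r (psiFn r m C) - r)) (moveUpper r f C) = C
    rw [hμX, show r + d - r = d from by omega]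
    apply moveUpper_comp hk1 hC hrows
    intro p hp h1 q hq
    simp only [hf]
    omega

end Maps2

/-- "Go to the bottom" lemma, first equation: for `t ≥ 0`, `s ≥ t + 2`, `m ≥ k s`,
`B(m) = B₁(m) + B₂(m)` where `B` requires rows `jk+1` (`0 ≤ j ≤ t`) bottom-anchored
and a placement in row `m`; `B₁` requires rows `jk+1` (`0 ≤ j ≤ t+1`) bottom-anchored;
`B₂` requires rows `jk+1` (`0 ≤ j ≤ t`) bottom-anchored, row `(t+1)k+1` barred, and
a placement in row `m`. -/
theorem go_to_the_bottom_first (k n s : ℕ) (hk : 2 ≤ k) (hn : 1 ≤ n)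
    (t : ℕ) (hs : t + 2 ≤ s) (m : ℕ) (hm : k * s ≤ m) :
    {C | IsFreeConfig k n m s C ∧ (∀ j ≤ t, BottomAnchored C (j * k + 1)) ∧
        ∃ p ∈ C, ∃ q ∈ p, q.2 = m}.ncard =
      {C | IsFreeConfig k n m s C ∧ ∀ j ≤ t + 1, BottomAnchored C (j * k + 1)}.ncard +
      {C | IsFreeConfig k n m s C ∧ (∀ j ≤ t, BottomAnchored C (j * k + 1)) ∧
          Barred C ((t + 1) * k + 1) ∧ ∃ p ∈ C, ∃ q ∈ p, q.2 = m}.ncard := by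
  classical
  set r : ℕ := (t + 1) * k + 1 with hrdef
  have hrm : r < m := by
    have h1 : k * (t + 2) ≤ k * s := Nat.mul_le_mul_left k hs
    have h2 : (t + 1) * k + 1 + (k - 1) = k * (t + 2) := by ring_nf; omega
    omega
  have hr1 : 1 ≤ r := by omega
  have hlow : ∀ j ≤ t, j * k + 1 < r := by
    intro j hj
    have : j * k ≤ t * k := Nat.mul_le_mul_right k hj
    have : t * k < (t + 1) * k :=
      (Nat.mul_lt_mul_right (show 0 < k by omega)).2 (by omega)
    omega
  set S := {C | IsFreeConfig k n m s C ∧ (∀ j ≤ t, BottomAnchored C (j * k + 1)) ∧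
      ∃ p ∈ C, ∃ q ∈ p, q.2 = m} with hSdef
  set S1 := {C | IsFreeConfig k n m s C ∧ ∀ j ≤ t + 1, BottomAnchored C (j * k + 1)} with hS1def
  set S2 := {C | IsFreeConfig k n m s C ∧ (∀ j ≤ t, BottomAnchored C (j * k + 1)) ∧
      Barred C ((t + 1) * k + 1) ∧ ∃ p ∈ C, ∃ q ∈ p, q.2 = m} with hS2def
  set A := {C | IsFreeConfig k n m s C ∧ (∀ j ≤ t + 1, BottomAnchored C (j * k + 1)) ∧
      ∃ p ∈ C, ∃ q ∈ p, q.2 = m} with hAdef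
  set Sc := {C | IsFreeConfig k n m s C ∧ (∀ j ≤ t, BottomAnchored C (j * k + 1)) ∧
      (∃ p ∈ C, ∃ q ∈ p, q.2 = m) ∧ ¬ ∃ p ∈ C, ∃ q ∈ p, q.2 = r} with hScdef
  set S1c := {C | IsFreeConfig k n m s C ∧ (∀ j ≤ t + 1, BottomAnchored C (j * k + 1)) ∧
      ¬ ∃ p ∈ C, ∃ q ∈ p, q.2 = m} with hS1cdef
  -- anchors up to t+1 from anchors up to t plus anchor at r
  have hanch_ext : ∀ C : Finset (Finset (ℕ × ℕ)), (∀ j ≤ t, BottomAnchored C (j * k + 1)) →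
      BottomAnchored C r → ∀ j ≤ t + 1, BottomAnchored C (j * k + 1) := by
    intro C ha har j hj
    rcases Nat.lt_or_ge j (t + 1) with h | h
    · exact ha j (by omega)
    · have : j = t + 1 := by omega
      rw [this]
      exact har
  -- finiteness
  have hfA : A.Finite := config_set_finite k n m s _
  have hfS2 : S2.Finite := config_set_finite k n m s _
  have hfSc : Sc.Finite := config_set_finite k n m s _
  have hfS1c : S1c.Finite := config_set_finite k n m s _
  -- partition of S
  have hS : S = (A ∪ S2) ∪ Sc := by
    ext C
    simp only [hSdef, hAdef, hS2def, hScdef, Set.mem_setOf_eq, Set.mem_union]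
    constructor
    · rintro ⟨hcfg, ha, htop⟩
      by_cases hb : Barred C r
      · exact Or.inl (Or.inr ⟨hcfg, ha, hb, htop⟩)
      · by_cases ho : ∃ p ∈ C, ∃ q ∈ p, q.2 = r
        · refine Or.inl (Or.inl ⟨hcfg, hanch_ext C ha ⟨ho, ?_⟩, htop⟩)
          intro p hp hpo
          refine ⟨hpo, fun q hq => ?_⟩
          by_contra hlt
          exact hb ⟨p, hp, hpo, q, hq, by omega⟩
        · exact Or.inr ⟨hcfg, ha, htop, ho⟩
    · rintro ((⟨hcfg, ha, htop⟩ | ⟨hcfg, ha, hb, htop⟩) | ⟨hcfg, ha, htop, ho⟩)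
      · exact ⟨hcfg, fun j hj => ha j (by omega), htop⟩
      · exact ⟨hcfg, ha, htop⟩
      · exact ⟨hcfg, ha, htop⟩
  have hdAS2 : Disjoint A S2 := by
    rw [Set.disjoint_left]
    rintro C ⟨hcfg, ha, htop⟩ ⟨hcfg', ha', hb, htop'⟩
    exact not_barred_of_anchored (ha (t + 1) le_rfl) hb
  have hdASc : Disjoint A Sc := by
    rw [Set.disjoint_left]
    rintro C ⟨hcfg, ha, htop⟩ ⟨hcfg', ha', htop', ho⟩
    exact ho (ha (t + 1) le_rfl).1
  have hdS2Sc : Disjoint S2 Sc := by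
    rw [Set.disjoint_left]
    rintro C ⟨hcfg, ha, ⟨p, hp, ⟨q, hq, hqr⟩, -⟩, htop⟩ ⟨hcfg', ha', htop', ho⟩
    exact ho ⟨p, hp, q, hq, hqr⟩
  have hcardS : S.ncard = A.ncard + S2.ncard + Sc.ncard := by
    rw [hS, Set.ncard_union_eq (by simp [Set.disjoint_union_left, hdASc, hdS2Sc])
        (hfA.union hfS2) hfSc,
      Set.ncard_union_eq hdAS2 hfA hfS2]
  -- partition of S1
  have hS1 : S1 = A ∪ S1c := by
    ext C
    simp only [hS1def, hAdef, hS1cdef, Set.mem_setOf_eq, Set.mem_union]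
    constructor
    · rintro ⟨hcfg, ha⟩
      by_cases htop : ∃ p ∈ C, ∃ q ∈ p, q.2 = m
      · exact Or.inl ⟨hcfg, ha, htop⟩
      · exact Or.inr ⟨hcfg, ha, htop⟩
    · rintro (⟨hcfg, ha, -⟩ | ⟨hcfg, ha, -⟩) <;> exact ⟨hcfg, ha⟩
  have hdAS1c : Disjoint A S1c := by
    rw [Set.disjoint_left]
    rintro C ⟨hcfg, ha, htop⟩ ⟨hcfg', ha', htop'⟩
    exact htop' htop
  have hcardS1 : S1.ncard = A.ncard + S1c.ncard := by
    rw [hS1, Set.ncard_union_eq hdAS1c hfA hfS1c]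
  -- the bijection between Sc and S1c
  have hbij : Set.BijOn (phiFn r) Sc S1c := by
    have hmapsPhi : Set.MapsTo (phiFn r) Sc S1c := by
      rintro C ⟨hcfg, ha, htop, ho⟩
      obtain ⟨hcfg', hanchr', hnm', hiff', -⟩ := phi_spec hk hr1 hrm hcfg htop ho
      refine ⟨hcfg', ?_, hnm'⟩
      refine hanch_ext _ (fun j hj => ?_) hanchr'
      exact (hiff' _ (hlow j hj)).2 (ha j hj)
    have hmapsPsi : Set.MapsTo (psiFn r m) S1c Sc := by
      rintro C ⟨hcfg, ha, hnm⟩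
      obtain ⟨hcfg', htop', hnr', hiff', -⟩ := psi_spec hk hr1 hrm hcfg (ha (t + 1) le_rfl) hnm
      refine ⟨hcfg', fun j hj => (hiff' _ (hlow j hj)).2 (ha j (by omega)), htop', hnr'⟩
    have hinv : Set.InvOn (psiFn r m) (phiFn r) Sc S1c := by
      constructor
      · rintro C ⟨hcfg, ha, htop, ho⟩
        exact (phi_spec hk hr1 hrm hcfg htop ho).2.2.2.2
      · rintro C ⟨hcfg, ha, hnm⟩
        exact (psi_spec hk hr1 hrm hcfg (ha (t + 1) le_rfl) hnm).2.2.2.2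
    exact hinv.bijOn hmapsPhi hmapsPsi
  have hcardSc : Sc.ncard = S1c.ncard := by
    rw [← hbij.image_eq]
    exact (Set.ncard_image_of_injOn hbij.injOn).symm
  show S.ncard = S1.ncard + S2.ncard
  omega
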